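/- In the algebra P_n, for every x,y in P_n and every d in the subspace D_n = span{c_i, d_{ij}, e_{ij}}, the operators V_{d,y} and V_{y,d} are zero, i.e., (d·a)·y = 0 and (y·a)·d = 0 for all a in P_n. Moreover (A_n + span{d_{ij}, e_{ij}})·V_{x,y} = 0, i.e., (x·u)·y = 0 whenever u lies in the span of the a_{ij}, b_{ij}, d_{ij}, e_{ij}. -/

import Mathlib

inductive PBasis (n : ℕ) : Type
  | a : Fin n → Fin n → PBasis n
  | b : Fin n → Fin n → PBasis n
  | c : Fin n → PBasis n
  | d : Fin n → Fin n → PBasis n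
  | e : Fin n → Fin n → PBasis n
  deriving DecidableEq

abbrev Pn (F : Type*) [Field F] (n : ℕ) : Type _ := PBasis n →₀ F

open PBasis in
noncomputable def mulB (F : Type*) [Field F] {n : ℕ} : PBasis n → PBasis n → Pn F n
  | a i j, c k => if k = i then Finsupp.single (d i j) 1 else 0
  | b i j, c k => if k = i then Finsupp.single (e i j) 1 else 0
  | a i j, e k l => if i = k ∧ j = l then Finsupp.single (c j) 1 else 0
  | e k l, a i j => if i = k ∧ j = l then Finsupp.single (c j) 1 else 0
  | b i j, d k l => if i = k ∧ j = l then -Finsupp.single (c j) 1 else 0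
  | d k l, b i j => if i = k ∧ j = l then -Finsupp.single (c j) 1 else 0
  | _, _ => 0

noncomputable def mulLin (F : Type*) [Field F] {n : ℕ} :
    Pn F n →ₗ[F] Pn F n →ₗ[F] Pn F n :=
  Finsupp.lift (Pn F n →ₗ[F] Pn F n) F (PBasis n)
    (fun u => Finsupp.lift (Pn F n) F (PBasis n) (fun v => mulB F u v))

noncomputable instance (F : Type*) [Field F] (n : ℕ) : Mul (Pn F n) :=
  ⟨fun x y => mulLin F x y⟩

noncomputable def Cspan (F : Type*) [Field F] (n : ℕ) : Submodule F (Pn F n) :=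
  Submodule.span F (Set.range fun i => (Finsupp.single (PBasis.c i) 1 : Pn F n))

noncomputable def Aspan (F : Type*) [Field F] (n : ℕ) : Submodule F (Pn F n) :=
  Submodule.span F {x : Pn F n | ∃ i j,
    x = Finsupp.single (PBasis.a i j) 1 ∨ x = Finsupp.single (PBasis.b i j) 1}

noncomputable def Cbarspan (F : Type*) [Field F] (n : ℕ) : Submodule F (Pn F n) :=
  Submodule.span F {x : Pn F n | ∃ i j,
    x = Finsupp.single (PBasis.d i j) 1 ∨ x = Finsupp.single (PBasis.e i j) 1}

noncomputable def Dspan (F : Type*) [Field F] (n : ℕ) : Submodule F (Pn F n) :=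
  Submodule.span F {x : Pn F n | (∃ i, x = Finsupp.single (PBasis.c i) 1) ∨
    ∃ i j, x = Finsupp.single (PBasis.d i j) 1 ∨ x = Finsupp.single (PBasis.e i j) 1}

/-
A product of two basis vectors is 0, ±c_j, d_ij or e_ij, and it is a multiple of some c_j
as soon as the left factor lies in D_n or the right factor is not a c_k. Hence
D_n·P_n ⊆ C_n, P_n·(A_n + span{d_ij, e_ij}) ⊆ C_n and P_n·P_n ⊆ D_n, where C_n = span{c_i}.
Since the c_i annihilate everything from the left and D_n·D_n = 0, the three products vanish.
-/
open Finsupp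

theorem Finsupp.apply₂_mem_of_mem_supported {α β R P : Type*} [CommSemiring R]
    [AddCommMonoid P] [Module R P] (f : (α →₀ R) →ₗ[R] (β →₀ R) →ₗ[R] P)
    {s : Set α} {t : Set β} {U : Submodule R P}
    (h : ∀ a ∈ s, ∀ b ∈ t, f (single a 1) (single b 1) ∈ U)
    {x : α →₀ R} {y : β →₀ R} (hx : x ∈ supported R R s) (hy : y ∈ supported R R t) :
    f x y ∈ U := by
  rw [supported_eq_span_single] at hx hy
  refine Submodule.map₂_le.mp ?_ x hx y hy
  rw [Submodule.map₂_span_span, Submodule.span_le]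
  rintro _ ⟨_, ⟨a, ha, rfl⟩, _, ⟨b, hb, rfl⟩, rfl⟩
  exact h a ha b hb

namespace PBasis

variable {n : ℕ}

def IsC : PBasis n → Prop
  | c _ => True
  | _ => False

def IsD : PBasis n → Prop
  | c _ | d _ _ | e _ _ => True
  | _ => False

end PBasis

open PBasis

section

variable {F : Type*} [Field F] {n : ℕ}

theorem mulLin_single_single (u v : PBasis n) :
    mulLin F (single u 1) (single v 1) = mulB F u v := by
  simp [mulLin]

theorem mul_mem_of_mem_supported {s t : Set (PBasis n)} {U : Submodule F (Pn F n)}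
    (h : ∀ u ∈ s, ∀ v ∈ t, mulB F u v ∈ U) {x y : Pn F n}
    (hx : x ∈ supported F F s) (hy : y ∈ supported F F t) : x * y ∈ U :=
  apply₂_mem_of_mem_supported (mulLin F) (fun u hu v hv => by
    rw [mulLin_single_single]; exact h u hu v hv) hx hy

theorem Cspan_eq_supported : Cspan F n = supported F F {v | v.IsC} := by
  rw [Cspan, supported_eq_span_single]
  congr 1
  ext x
  constructor
  · rintro ⟨i, rfl⟩
    exact ⟨c i, trivial, rfl⟩
  · rintro ⟨v, hv, rfl⟩
    cases v <;> first | exact ⟨_, rfl⟩ | exact hv.elim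

theorem Dspan_eq_supported : Dspan F n = supported F F {v | v.IsD} := by
  rw [Dspan, supported_eq_span_single]
  congr 1
  ext x
  constructor
  · rintro (⟨i, rfl⟩ | ⟨i, j, rfl | rfl⟩)
    exacts [⟨c i, trivial, rfl⟩, ⟨d i j, trivial, rfl⟩, ⟨e i j, trivial, rfl⟩]
  · rintro ⟨v, hv, rfl⟩
    cases v
    all_goals first
      | exact hv.elim
      | exact Or.inl ⟨_, rfl⟩
      | exact Or.inr ⟨_, _, Or.inl rfl⟩
      | exact Or.inr ⟨_, _, Or.inr rfl⟩

theorem Aspan_add_Cbarspan_le_supported :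
    Aspan F n + Cbarspan F n ≤ supported F F {v | ¬ v.IsC} := by
  rw [Submodule.add_eq_sup, sup_le_iff, Aspan, Cbarspan, Submodule.span_le, Submodule.span_le]
  constructor <;>
  · rintro _ ⟨i, j, rfl | rfl⟩ <;> exact single_mem_supported F 1 id

theorem mulB_eq_zero_of_isC {u : PBasis n} (hu : u.IsC) (v : PBasis n) : mulB F u v = 0 := by
  cases u <;> cases v <;> first | rfl | exact hu.elim

theorem mulB_eq_zero_of_isD {u v : PBasis n} (hu : u.IsD) (hv : v.IsD) : mulB F u v = 0 := by
  cases u <;> cases v <;> first | rfl | exact hu.elim | exact hv.elim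

theorem mulB_mem_Cspan {u v : PBasis n} (h : u.IsD ∨ ¬ v.IsC) : mulB F u v ∈ Cspan F n := by
  rw [Cspan_eq_supported]
  cases u <;> cases v <;> simp only [mulB] <;> (try split_ifs) <;>
    first
    | exact zero_mem _
    | exact single_mem_supported F 1 trivial
    | exact neg_mem (single_mem_supported F 1 trivial)
    | simp [IsC, IsD] at h

theorem mulB_mem_Dspan (u v : PBasis n) : mulB F u v ∈ Dspan F n := by
  rw [Dspan_eq_supported]
  cases u <;> cases v <;> simp only [mulB] <;> (try split_ifs) <;>
    first
    | exact zero_mem _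
    | exact single_mem_supported F 1 trivial
    | exact neg_mem (single_mem_supported F 1 trivial)

theorem mem_supported_univ (x : Pn F n) : x ∈ supported F F Set.univ := by
  simp [supported_univ]

theorem mul_eq_zero_of_mem_Cspan {x : Pn F n} (hx : x ∈ Cspan F n) (y : Pn F n) : x * y = 0 := by
  rw [Cspan_eq_supported] at hx
  rw [← Submodule.mem_bot F]
  exact mul_mem_of_mem_supported (fun u hu v _ => by simp [mulB_eq_zero_of_isC hu])
    hx (mem_supported_univ y)

theorem mul_mem_Cspan_of_mem_Dspan {x : Pn F n} (hx : x ∈ Dspan F n) (y : Pn F n) :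
    x * y ∈ Cspan F n := by
  rw [Dspan_eq_supported] at hx
  exact mul_mem_of_mem_supported (fun u hu v _ => mulB_mem_Cspan (.inl hu))
    hx (mem_supported_univ y)

theorem mul_mem_Cspan_of_mem_Aspan_add_Cbarspan (x : Pn F n) {y : Pn F n}
    (hy : y ∈ Aspan F n + Cbarspan F n) : x * y ∈ Cspan F n :=
  mul_mem_of_mem_supported (fun _ _ _ hv => mulB_mem_Cspan (.inr hv))
    (mem_supported_univ x) (Aspan_add_Cbarspan_le_supported hy)

theorem mul_mem_Dspan (x y : Pn F n) : x * y ∈ Dspan F n :=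
  mul_mem_of_mem_supported (fun u _ v _ => mulB_mem_Dspan u v)
    (mem_supported_univ x) (mem_supported_univ y)

theorem mul_eq_zero_of_mem_Dspan {x y : Pn F n} (hx : x ∈ Dspan F n) (hy : y ∈ Dspan F n) :
    x * y = 0 := by
  rw [Dspan_eq_supported] at hx hy
  rw [← Submodule.mem_bot F]
  exact mul_mem_of_mem_supported (fun u hu v hv => by simp [mulB_eq_zero_of_isD hu hv]) hx hy

end

theorem stmt (F : Type*) [Field F] (n : ℕ) :
    (∀ d y u : Pn F n, d ∈ Dspan F n → (d * u) * y = 0 ∧ (y * u) * d = 0) ∧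
    (∀ x y u : Pn F n, u ∈ Aspan F n + Cbarspan F n → (x * u) * y = 0) :=
  ⟨fun d y u hd => ⟨mul_eq_zero_of_mem_Cspan (mul_mem_Cspan_of_mem_Dspan hd u) y,
      mul_eq_zero_of_mem_Dspan (mul_mem_Dspan y u) hd⟩,
    fun x y u hu => mul_eq_zero_of_mem_Cspan (mul_mem_Cspan_of_mem_Aspan_add_Cbarspan x hu) y⟩
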